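/- arXiv:2303.07052 — 4 statements merged into one kernel-verified Lean document; each statement's English description precedes it below -/
import Mathlib

section
/- Let α ∈ ℂ with Re(α) > 0, let x : ℕ → ℂ, and let z ∈ ℂ with |z| > 1 be such that Σ_{k=0}^∞ |x(k)|·|z|^{−k} < ∞. Define the fractional sum (Δ^{−α}x)(n) = Σ_{s=0}^n φ_α(n−s)·x(s) for n ∈ ℕ. Then the series Σ_{n=0}^∞ (Δ^{−α}x)(n)·z^{−n} converges absolutely and equals (1−z^{−1})^{−α} · Σ_{k=0}^∞ x(k)·z^{−k}, where (1−z^{−1})^{−α} is the principal complex power. -/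
/-!
Since `Γ(n + α) / (Γ(α) n!) = (α + n - 1).choose n`, the generating function `∑ φ_α(n) wⁿ` is
the binomial series of `(1 - w) ^ (-α)`, convergent for `‖w‖ < 1`. With `w = z⁻¹`, the
Z-transform of `φ_α * x` is the Cauchy product of two absolutely convergent series.
-/

open Finset

theorem mem_eball_zero_one_of_norm_lt_one {E : Type*} [SeminormedAddCommGroup E] {w : E}
    (hw : ‖w‖ < 1) : w ∈ Metric.eball (0 : E) 1 := by
  rw [← ENNReal.ofReal_one, Metric.eball_ofReal]
  simpa using hw

namespace Complex

theorem Gamma_nat_add_div_eq_choose {α : ℂ} (hα : ∀ k : ℕ, α ≠ -k) (n : ℕ) :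
    Gamma (n + α) / (Gamma α * Gamma (n + 1)) = Ring.choose (α + n - 1) n := by
  rw [add_comm (n : ℂ) α, Gamma_nat_eq_factorial, ← div_div, Gamma_add_nat_div_Gamma_eq α hα,
    ← Ring.multichoose_eq, ← Polynomial.ascPochhammer_smeval_eq_eval,
    ← Ring.factorial_nsmul_multichoose_eq_ascPochhammer, nsmul_eq_mul,
    mul_div_cancel_left₀ _ (Nat.cast_ne_zero.mpr n.factorial_ne_zero)]

theorem hasSum_choose_mul_pow (a : ℂ) {w : ℂ} (hw : ‖w‖ < 1) :
    HasSum (fun n : ℕ => Ring.choose (a + n - 1) n * w ^ n) ((1 - w) ^ (-a)) := by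
  simpa [FormalMultilinearSeries.ofScalars_apply_eq, cpow_neg, mul_comm] using
    (one_div_one_sub_cpow_hasFPowerSeriesOnBall_zero a).hasSum
      (mem_eball_zero_one_of_norm_lt_one hw)

theorem summable_norm_choose_mul_pow (a : ℂ) {w : ℂ} (hw : ‖w‖ < 1) :
    Summable fun n : ℕ => ‖Ring.choose (a + n - 1) n * w ^ n‖ := by
  have hr := (one_div_one_sub_cpow_hasFPowerSeriesOnBall_zero a).r_le
  simpa [FormalMultilinearSeries.ofScalars_apply_eq, mul_comm] using
    FormalMultilinearSeries.summable_norm_apply _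
      (Metric.eball_subset_eball hr (mem_eball_zero_one_of_norm_lt_one hw))

end Complex

section Convolution

variable {R : Type*} [NormedCommRing R] (f g : ℕ → R) (w : R)

theorem sum_range_mul_pow_eq (n : ℕ) :
    (∑ s ∈ range (n + 1), f (n - s) * g s) * w ^ n
      = ∑ k ∈ range (n + 1), f k * w ^ k * (g (n - k) * w ^ (n - k)) := by
  rw [sum_mul, ← sum_range_reflect]
  refine sum_congr rfl fun k hk => ?_
  have hkn : k ≤ n := Nat.lt_succ_iff.mp (mem_range.mp hk)
  rw [Nat.add_sub_cancel, Nat.sub_sub_self hkn, mul_mul_mul_comm, ← pow_add,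
    Nat.add_sub_cancel' hkn]

variable {f g w}

theorem summable_norm_sum_range_mul_pow (hf : Summable fun n => ‖f n * w ^ n‖)
    (hg : Summable fun n => ‖g n * w ^ n‖) :
    Summable fun n => ‖(∑ s ∈ range (n + 1), f (n - s) * g s) * w ^ n‖ := by
  simpa only [sum_range_mul_pow_eq] using summable_norm_sum_mul_range_of_summable_norm hf hg

theorem tsum_sum_range_mul_pow [CompleteSpace R] (hf : Summable fun n => ‖f n * w ^ n‖)
    (hg : Summable fun n => ‖g n * w ^ n‖) :
    ∑' n, (∑ s ∈ range (n + 1), f (n - s) * g s) * w ^ n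
      = (∑' n, f n * w ^ n) * ∑' n, g n * w ^ n := by
  simpa only [sum_range_mul_pow_eq] using
    (tsum_mul_tsum_eq_tsum_sum_range_of_summable_norm hf hg).symm

end Convolution

/-- Convolution property of the Z-transform for the fractional sum: for `Re α > 0`,
`|z| > 1` and `∑ |x(k)| |z|^{-k} < ∞`, the Z-transform of
`(Δ^{-α}x)(n) = ∑_{s=0}^n φ_α(n-s) x(s)` converges absolutely and equals
`(1-z⁻¹)^{-α} ∑ x(k) z^{-k}`. -/
theorem z_transform_fractional_sum (α : ℂ) (hα : 0 < α.re) (x : ℕ → ℂ)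
    (z : ℂ) (hz : 1 < ‖z‖)
    (hx : Summable (fun k : ℕ => ‖x k‖ * ‖z‖ ^ (-(k : ℤ))))
    (φ : ℕ → ℂ)
    (hφ : ∀ n : ℕ, φ n = Complex.Gamma ((n : ℂ) + α) /
      (Complex.Gamma α * Complex.Gamma ((n : ℂ) + 1)))
    (Δ : ℕ → ℂ)
    (hΔ : ∀ n : ℕ, Δ n = ∑ s ∈ Finset.range (n + 1), φ (n - s) * x s) :
    Summable (fun n : ℕ => ‖Δ n * z ^ (-(n : ℤ))‖) ∧
      ∑' n : ℕ, Δ n * z ^ (-(n : ℤ))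
        = (1 - z⁻¹) ^ (-α) * ∑' k : ℕ, x k * z ^ (-(k : ℤ)) := by
  have hw : ‖z⁻¹‖ < 1 := by simpa using inv_lt_one_of_one_lt₀ hz
  have hzpow (n : ℕ) : z ^ (-(n : ℤ)) = z⁻¹ ^ n := by simp [zpow_neg, inv_pow]
  have hα_ne_neg_nat (k : ℕ) : α ≠ -k := fun h => by
    simp only [h, Complex.neg_re, Complex.natCast_re, Left.neg_pos_iff] at hα
    exact hα.not_ge k.cast_nonneg
  have hφ_choose : φ = fun n : ℕ => Ring.choose (α + n - 1) n :=
    funext fun n => (hφ n).trans (Complex.Gamma_nat_add_div_eq_choose hα_ne_neg_nat n)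
  have hxw : Summable fun n => ‖x n * z⁻¹ ^ n‖ := by
    simpa [hzpow, norm_mul, norm_pow] using hx
  have hφw : Summable fun n => ‖φ n * z⁻¹ ^ n‖ := by
    simpa only [hφ_choose] using Complex.summable_norm_choose_mul_pow α hw
  simp only [hzpow, funext hΔ]
  refine ⟨summable_norm_sum_range_mul_pow hφw hxw, ?_⟩
  rw [tsum_sum_range_mul_pow hφw hxw, hφ_choose, (Complex.hasSum_choose_mul_pow α hw).tsum_eq]
end

section
/- Let α ∈ ℂ with Re(α) > 0, a ∈ ℂ, b ∈ ℝ, τ ∈ ℕ with τ ≥ 1, and x₀ ∈ ℂ. Let x : ℕ → ℂ satisfy x(0) = x₀ and, for every t ≥ 1, x(t) = b·x̄(t−τ) + x₀ + Σ_{j=0}^{t−1} (Γ(t−j+α−1)/(Γ(α)·Γ(t−j)))·(a−1)·x(j), where x̄(s) = x(s) for s ≥ 0 and x̄(s) = 0 for s < 0. Let z ∈ ℂ with |z| > 1 be such that Σ_{k=0}^∞ |x(k)|·|z|^{−k} < ∞, and set X(z) = Σ_{k=0}^∞ x(k)·z^{−k}. Then X(z)·( z − b·z^{1−τ} − (a−1)·(1−z^{−1})^{−α}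 ) = z·x₀ + x₀/(1−z^{−1}), where (1−z^{−1})^{−α} is the principal complex power. -/
/-!
Put `w = z⁻¹` and `τ = σ + 1`, so that `X = ∑ x(k) wᵏ`. The kernel coefficient
`Γ(k + α) / (Γ(α) k!)` is `multichoose α k`, the `k`-th Taylor coefficient of `(1 - w)^(-α)`, so
the recurrence at `t = n + 1` reads
`x(n+1) = b x̄(n - σ) + x₀ + (a - 1) ∑_{j ≤ n} x(j) multichoose α (n - j)`.
Multiplying by `wⁿ` and summing (all series converge absolutely since `‖w‖ < 1`), the delayed term
gives `w^σ X`, the constant gives `x₀ / (1 - w)` and the convolution gives `X (1 - w)^(-α)` by the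
Cauchy product, while the left side sums to `(X - x₀) / w`. Multiplying by `z` gives the identity.
-/

open Finset Complex Nat

theorem Complex.Gamma_add_nat_div_Gamma_mul_factorial {α : ℂ} (hα : ∀ k : ℕ, α ≠ -k) (n : ℕ) :
    Gamma (α + n) / (Gamma α * n !) = Ring.multichoose α n := by
  have hΓ : Gamma α ≠ 0 := Gamma_ne_zero hα
  rw [div_mul_eq_div_div, Gamma_add_nat_div_Gamma_eq α hα,
    div_eq_iff (by simp [n.factorial_ne_zero]), ← Polynomial.ascPochhammer_smeval_eq_eval,
    ← Ring.factorial_nsmul_multichoose_eq_ascPochhammer, nsmul_eq_mul, mul_comm]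

theorem Complex.Gamma_sub_add_sub_one_div_eq_multichoose {α : ℂ} (hα : ∀ k : ℕ, α ≠ -k)
    {n j : ℕ} (hj : j ≤ n) :
    Gamma (((n + 1 : ℕ) : ℂ) - j + α - 1) / (Gamma α * Gamma (((n + 1 : ℕ) : ℂ) - j))
      = Ring.multichoose α (n - j) := by
  obtain ⟨m, rfl⟩ := Nat.exists_eq_add_of_le hj
  have harg : ((j + m + 1 : ℕ) : ℂ) - j + α - 1 = α + m := by push_cast; ring
  have hfac : ((j + m + 1 : ℕ) : ℂ) - j = m + 1 := by push_cast; ring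
  rw [harg, hfac, Gamma_nat_eq_factorial, Nat.add_sub_cancel_left,
    Gamma_add_nat_div_Gamma_mul_factorial hα]

theorem Complex.hasFPowerSeriesOnBall_one_sub_cpow_neg (α : ℂ) :
    HasFPowerSeriesOnBall (fun w : ℂ ↦ (1 - w) ^ (-α))
      (.ofScalars ℂ fun n ↦ Ring.multichoose α n) 0 1 := by
  simpa [cpow_neg, Ring.multichoose_eq] using one_div_one_sub_cpow_hasFPowerSeriesOnBall_zero α

theorem Complex.hasSum_multichoose_mul_pow (α : ℂ) {w : ℂ} (hw : ‖w‖ < 1) :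
    HasSum (fun n ↦ Ring.multichoose α n * w ^ n) ((1 - w) ^ (-α)) := by
  have hw' : w ∈ Metric.eball (0 : ℂ) 1 :=
    mem_eball_zero_iff.2 (by rwa [← ofReal_norm, ENNReal.ofReal_lt_one])
  simpa [FormalMultilinearSeries.ofScalars] using
    (hasFPowerSeriesOnBall_one_sub_cpow_neg α).hasSum hw'

theorem Complex.summable_norm_multichoose_mul_pow (α : ℂ) {w : ℂ} (hw : ‖w‖ < 1) :
    Summable fun n ↦ ‖Ring.multichoose α n * w ^ n‖ := by
  have hw' : w ∈ Metric.eball (0 : ℂ) 1 :=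
    mem_eball_zero_iff.2 (by rwa [← ofReal_norm, ENNReal.ofReal_lt_one])
  simpa [FormalMultilinearSeries.ofScalars] using FormalMultilinearSeries.summable_norm_apply _
    (Metric.eball_subset_eball (hasFPowerSeriesOnBall_one_sub_cpow_neg α).r_le hw')

section GeneratingFunction

variable {R : Type*} [NormedCommRing R] {u v : ℕ → R} {w U V : R}

theorem hasSum_sum_range_mul_mul_pow [CompleteSpace R]
    (hu : Summable fun n ↦ ‖u n * w ^ n‖) (hv : Summable fun n ↦ ‖v n * w ^ n‖) :
    HasSum (fun n ↦ (∑ k ∈ range (n + 1), u k * v (n - k)) * w ^ n)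
      ((∑' n, u n * w ^ n) * ∑' n, v n * w ^ n) := by
  refine (hasSum_sum_range_mul_of_summable_norm hu hv).congr_fun fun n ↦ ?_
  rw [sum_mul]
  refine sum_congr rfl fun k hk ↦ ?_
  obtain ⟨m, rfl⟩ := Nat.exists_eq_add_of_le (Nat.le_of_lt_succ (mem_range.mp hk))
  rw [Nat.add_sub_cancel_left, pow_add]
  ring

theorem HasSum.delay (h : HasSum (fun n ↦ u n * w ^ n) U) (σ : ℕ) :
    HasSum (fun n ↦ (if n < σ then 0 else u (n - σ)) * w ^ n) (w ^ σ * U) := by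
  refine ((add_left_injective σ).hasSum_iff fun n hn ↦ ?_).mp ?_
  · have : n < σ := by
      by_contra hσ
      exact hn ⟨n - σ, Nat.sub_add_cancel (not_lt.mp hσ)⟩
    simp [this]
  · refine (h.mul_left (w ^ σ)).congr_fun fun n ↦ ?_
    simp only [Function.comp_apply, add_tsub_cancel_right, not_lt.mpr (Nat.le_add_left σ n),
      if_false, pow_add]
    ring

theorem HasSum.of_succ_mul_pow (h : HasSum (fun n ↦ u (n + 1) * w ^ n) V) :
    HasSum (fun n ↦ u n * w ^ n) (u 0 + w * V) := by
  have h' : HasSum (fun n ↦ u (n + 1) * w ^ (n + 1)) (w * V) :=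
    (h.mul_left w).congr_fun fun n ↦ by ring
  exact (hasSum_nat_add_iff' 1).mp (by simpa using h')

end GeneratingFunction

theorem delayed_fractional_succ_eq {α a x₀ : ℂ} (hα : ∀ k : ℕ, α ≠ -k) {b : ℝ} {σ : ℕ}
    {x : ℕ → ℂ} {xb : ℤ → ℂ} (hxb : ∀ s : ℤ, xb s = if s < 0 then 0 else x s.toNat)
    (hrec : ∀ t : ℕ, 1 ≤ t → x t = (b : ℂ) * xb ((t : ℤ) - ((σ + 1 : ℕ) : ℤ)) + x₀ +
      ∑ j ∈ range t, Gamma ((t : ℂ) - j + α - 1) / (Gamma α * Gamma ((t : ℂ) - j)) *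
        ((a - 1) * x j))
    (n : ℕ) :
    x (n + 1) = (b : ℂ) * (if n < σ then 0 else x (n - σ)) + x₀ +
      (a - 1) * ∑ j ∈ range (n + 1), x j * Ring.multichoose α (n - j) := by
  have hdelay : xb (((n + 1 : ℕ) : ℤ) - ((σ + 1 : ℕ) : ℤ)) = if n < σ then 0 else x (n - σ) := by
    rw [hxb]
    split_ifs <;> first | rfl | omega | (congr 1; omega)
  rw [hrec (n + 1) (Nat.le_add_left 1 n), hdelay, mul_sum]
  congr 1
  refine sum_congr rfl fun j hj ↦ ?_
  rw [Gamma_sub_add_sub_one_div_eq_multichoose hα (Nat.le_of_lt_succ (mem_range.mp hj))]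
  ring

/-- Equation (3) of the paper: the Z-transform of a solution of the delayed
fractional-order linear difference equation (2) satisfies
`X(z)(z - b z^{1-τ} - (a-1)(1-z⁻¹)^{-α}) = z x₀ + x₀/(1-z⁻¹)`. -/
theorem z_transform_delayed_fractional_eq (α a : ℂ) (hα : 0 < α.re) (b : ℝ)
    (τ : ℕ) (hτ : 1 ≤ τ) (x₀ : ℂ)
    (x : ℕ → ℂ) (xb : ℤ → ℂ)
    (hxb : ∀ s : ℤ, xb s = if s < 0 then 0 else x s.toNat)
    (hx0 : x 0 = x₀)
    (hrec : ∀ t : ℕ, 1 ≤ t → x t = (b : ℂ) * xb ((t : ℤ) - (τ : ℤ)) + x₀ +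
      ∑ j ∈ Finset.range t,
        Complex.Gamma ((t : ℂ) - (j : ℂ) + α - 1) /
          (Complex.Gamma α * Complex.Gamma ((t : ℂ) - (j : ℂ))) * ((a - 1) * x j))
    (z : ℂ) (hz : 1 < ‖z‖)
    (hsum : Summable (fun k : ℕ => ‖x k‖ * ‖z‖ ^ (-(k : ℤ))))
    (X : ℂ) (hX : X = ∑' k : ℕ, x k * z ^ (-(k : ℤ))) :
    X * (z - (b : ℂ) * z ^ ((1 : ℤ) - (τ : ℤ)) - (a - 1) * (1 - z⁻¹) ^ (-α))
      = z * x₀ + x₀ / (1 - z⁻¹) := by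
  obtain ⟨σ, rfl⟩ : ∃ σ, τ = σ + 1 := ⟨τ - 1, by omega⟩
  have hα' : ∀ k : ℕ, α ≠ -k := fun k h ↦ by simp [h] at hα; linarith
  set w := z⁻¹
  have hw : ‖w‖ < 1 := by rw [norm_inv]; exact inv_lt_one_of_one_lt₀ hz
  have hzpow : ∀ k : ℕ, z ^ (-(k : ℤ)) = w ^ k := fun k ↦ by rw [zpow_neg, zpow_natCast, inv_pow]
  have hxw : Summable fun n ↦ ‖x n * w ^ n‖ := by simpa [← hzpow] using hsum
  have hXw : HasSum (fun n ↦ x n * w ^ n) X := by simpa [hX, hzpow] using hxw.of_norm.hasSum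
  have hconv := hasSum_sum_range_mul_mul_pow hxw (summable_norm_multichoose_mul_pow α hw)
  rw [hXw.tsum_eq, (hasSum_multichoose_mul_pow α hw).tsum_eq] at hconv
  have hsucc : HasSum (fun n ↦ x (n + 1) * w ^ n)
      (b * (w ^ σ * X) + x₀ * (1 - w)⁻¹ + (a - 1) * (X * (1 - w) ^ (-α))) := by
    refine (((hXw.delay σ).mul_left _).add ((hasSum_geometric_of_norm_lt_one hw).mul_left x₀)
      |>.add (hconv.mul_left (a - 1))).congr_fun fun n ↦ ?_
    rw [delayed_fractional_succ_eq hα' hxb hrec n]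
    ring
  have hX_eq := hx0 ▸ hXw.unique hsucc.of_succ_mul_pow
  have hzw : z * w = 1 := mul_inv_cancel₀ (norm_pos_iff.mp (one_pos.trans hz))
  have hdelay_pow : z ^ ((1 : ℤ) - ((σ + 1 : ℕ) : ℤ)) = w ^ σ := by
    rw [← hzpow]; congr 1; push_cast; ring
  rw [hdelay_pow, div_eq_mul_inv]
  linear_combination z * hX_eq +
    (b * (w ^ σ * X) + x₀ * (1 - w)⁻¹ + (a - 1) * (X * (1 - w) ^ (-α))) * hzw
end

section
/- Let α ∈ (0,1), b ∈ ℝ, and τ = 1. Then β(π) = β(0) if and only if b = −1; that is, x_β(π) = 1 and y_β(π) = 0 hold exactly when b = −1. (This is the bifurcation curve b = g₃(α) ≡ −1 for τ = 1, at which the boundary curve intersects itself at β(0) = β(π).) -/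
open Real

theorem boundary_self_intersection_iff_general (α b : ℝ)
    (xβ yβ : ℝ → ℝ)
    (hx : ∀ t : ℝ, xβ t = 2 ^ α * (Real.sin (t / 2)) ^ α *
      (Real.cos (α * Real.pi / 2 + t * (1 - α / 2)) -
        b * Real.cos (α * Real.pi / 2 + t * (1 - (1 : ℝ) - α / 2))) + 1)
    (hy : ∀ t : ℝ, yβ t = 2 ^ α * (Real.sin (t / 2)) ^ α *
      (Real.sin (α * Real.pi / 2 + t * (1 - α / 2)) -
        b * Real.sin (α * Real.pi / 2 + t * (1 - (1 : ℝ) - α / 2)))) :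
    (xβ Real.pi = 1 ∧ yβ Real.pi = 0) ↔ b = -1 := by
  have phase_fast : α * π / 2 + π * (1 - α / 2) = π := by ring
  have phase_slow : α * π / 2 + π * (1 - (1 : ℝ) - α / 2) = 0 := by ring
  have hxπ : xβ π = 1 - 2 ^ α * (1 + b) := by
    rw [hx, phase_fast, phase_slow, sin_pi_div_two, one_rpow, cos_pi, cos_zero]
    ring
  have hyπ : yβ π = 0 := by
    rw [hy, phase_fast, phase_slow, sin_pi, sin_zero]
    ring
  have two_rpow_ne_zero : (2 : ℝ) ^ α ≠ 0 := (rpow_pos_of_pos two_pos α).ne'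
  rw [hxπ, hyπ, and_iff_left rfl, sub_eq_self, mul_eq_zero, or_iff_right two_rpow_ne_zero,
    add_eq_zero_iff_neg_eq, eq_comm]

/-- For delay `τ = 1`, the boundary curve satisfies `β(π) = β(0) = (1,0)` if and
only if `b = -1`; this is the bifurcation curve `b = g₃(α) ≡ -1`. -/
theorem boundary_self_intersection_iff (α b : ℝ) (hα : α ∈ Set.Ioo (0 : ℝ) 1)
    (xβ yβ : ℝ → ℝ)
    (hx : ∀ t : ℝ, xβ t = 2 ^ α * (Real.sin (t / 2)) ^ α *
      (Real.cos (α * Real.pi / 2 + t * (1 - α / 2)) -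
        b * Real.cos (α * Real.pi / 2 + t * (1 - (1 : ℝ) - α / 2))) + 1)
    (hy : ∀ t : ℝ, yβ t = 2 ^ α * (Real.sin (t / 2)) ^ α *
      (Real.sin (α * Real.pi / 2 + t * (1 - α / 2)) -
        b * Real.sin (α * Real.pi / 2 + t * (1 - (1 : ℝ) - α / 2)))) :
    (xβ Real.pi = 1 ∧ yβ Real.pi = 0) ↔ b = -1 :=
  boundary_self_intersection_iff_general α b xβ yβ hx hy
end

section
/- Let α ∈ (0,1) and b ∈ ℝ, and consider the boundary curve coordinates for delay τ = 2: x_β(t) = 2^α·(sin(t/2))^α·( cos(απ/2 + t(1−α/2)) − b·cos(απ/2 − t(1+α/2)) ) + 1 and y_β(t) = 2^α·(sin(t/2))^α·( sin(απ/2 + t(1−α/2)) − b·sin(απ/2 − t(1+α/2)) ). Suppose t₀ ∈ (0, 2π) is such that x_β and y_β are differentiable at t₀ with x_β′(t₀) = 0 and y_β′(t₀) = 0, and suppose −1 + α + b²(1+α) ≠ 0. Then cos(t₀) = ( −2 + 2α − α² + b²(2 + 2α + α²) ) / ( 2(−1 + α + b²(1+α)) ). -/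
/-!
Write `s = sin (t/2)`, `c = cos (t/2)` and `A`, `B` for the two phase angles. The factor `s ^ α`
has logarithmic derivative `(α/2) c / s`, so where both coordinates are stationary the
trigonometric factor `P` satisfies `(α/2) c P + s P' = 0`. In complex form this says
`e^{iA} ((α/2) c + i (1 - α/2) s) = b e^{iB} ((α/2) c - i (1 + α/2) s)`, and comparing moduli
gives `(α/2)² c² + (1 - α/2)² s² = b² ((α/2)² c² + (1 + α/2)² s²)`, an equation that is linear
in `s²` and hence in `cos t = 1 - 2 s²`.
-/

open Real

theorem hasDerivAt_sin_half_rpow {t : ℝ} (α : ℝ) (hs : 0 < sin (t / 2)) :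
    HasDerivAt (fun t => sin (t / 2) ^ α) (α / 2 * cos (t / 2) * sin (t / 2) ^ (α - 1)) t := by
  have hsin := (hasDerivAt_sin (t / 2)).comp t ((hasDerivAt_id' t).div_const 2)
  exact (hsin.rpow_const (Or.inl hs.ne')).congr_deriv (by simp only [Function.comp_apply]; ring)

theorem div_two_mul_cos_half_mul_add_sin_half_mul_eq_zero {f P : ℝ → ℝ} {t α C k P' : ℝ}
    (hs : 0 < sin (t / 2)) (hC : C ≠ 0) (hf : ∀ t, f t = C * sin (t / 2) ^ α * P t + k)
    (hP : HasDerivAt P P' t) (hf' : HasDerivAt f 0 t) :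
    α / 2 * cos (t / 2) * P t + sin (t / 2) * P' = 0 := by
  have hfC := (((hasDerivAt_sin_half_rpow α hs).mul hP).const_mul C).add_const k
  have hf'C : HasDerivAt (fun t => C * (sin (t / 2) ^ α * P t) + k) 0 t := by
    convert hf' using 1
    ext x
    rw [hf, mul_assoc]
  have hsα : sin (t / 2) ^ α = sin (t / 2) ^ (α - 1) * sin (t / 2) := by
    rw [← rpow_add_one hs.ne', sub_add_cancel]
  have hprod : C * sin (t / 2) ^ (α - 1) * (α / 2 * cos (t / 2) * P t + sin (t / 2) * P') = 0 := by
    rw [hf'C.unique hfC, hsα]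
    ring
  exact (mul_eq_zero.1 hprod).resolve_left (mul_ne_zero hC (rpow_pos_of_pos hs _).ne')

/-- The real form of `|(p + i q) e^{iA}| = |b (r + i w) e^{iB}|`. -/
theorem sq_add_sq_eq_of_rotate_eq {p q r w A B b : ℝ}
    (hre : p * cos A - q * sin A = b * (r * cos B - w * sin B))
    (him : p * sin A + q * cos A = b * (r * sin B + w * cos B)) :
    p ^ 2 + q ^ 2 = b ^ 2 * (r ^ 2 + w ^ 2) := by
  linear_combination (p * cos A - q * sin A + b * (r * cos B - w * sin B)) * hre +
    (p * sin A + q * cos A + b * (r * sin B + w * cos B)) * him +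
    b ^ 2 * (r ^ 2 + w ^ 2) * sin_sq_add_cos_sq B - (p ^ 2 + q ^ 2) * sin_sq_add_cos_sq A

theorem cusp_condition_tau_two_general (α b : ℝ)
    (xβ yβ : ℝ → ℝ)
    (hx : ∀ t : ℝ, xβ t = 2 ^ α * (Real.sin (t / 2)) ^ α *
      (Real.cos (α * Real.pi / 2 + t * (1 - α / 2)) -
        b * Real.cos (α * Real.pi / 2 - t * (1 + α / 2))) + 1)
    (hy : ∀ t : ℝ, yβ t = 2 ^ α * (Real.sin (t / 2)) ^ α *
      (Real.sin (α * Real.pi / 2 + t * (1 - α / 2)) -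
        b * Real.sin (α * Real.pi / 2 - t * (1 + α / 2))))
    (t₀ : ℝ) (ht₀ : t₀ ∈ Set.Ioo 0 (2 * Real.pi))
    (hdx : HasDerivAt xβ 0 t₀) (hdy : HasDerivAt yβ 0 t₀)
    (hden : -1 + α + b ^ 2 * (1 + α) ≠ 0) :
    Real.cos t₀ = (-2 + 2 * α - α ^ 2 + b ^ 2 * (2 + 2 * α + α ^ 2)) /
      (2 * (-1 + α + b ^ 2 * (1 + α))) := by
  have hs : 0 < sin (t₀ / 2) := sin_pos_of_pos_of_lt_pi (by linarith [ht₀.1]) (by linarith [ht₀.2])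
  have h2α : (2 : ℝ) ^ α ≠ 0 := (rpow_pos_of_pos two_pos α).ne'
  have hu : HasDerivAt (fun t => α * π / 2 + t * (1 - α / 2)) (1 - α / 2) t₀ := by
    simpa using ((hasDerivAt_id t₀).mul_const (1 - α / 2)).const_add (α * π / 2)
  have hv : HasDerivAt (fun t => α * π / 2 - t * (1 + α / 2)) (-(1 + α / 2)) t₀ := by
    simpa using ((hasDerivAt_id t₀).mul_const (1 + α / 2)).const_sub (α * π / 2)
  have hex := div_two_mul_cos_half_mul_add_sin_half_mul_eq_zero hs h2α hx
    (((hasDerivAt_cos _).comp t₀ hu).sub (((hasDerivAt_cos _).comp t₀ hv).const_mul b)) hdx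
  have hey := div_two_mul_cos_half_mul_add_sin_half_mul_eq_zero hs h2α (k := 0)
    (fun t => (hy t).trans (add_zero _).symm)
    (((hasDerivAt_sin _).comp t₀ hu).sub (((hasDerivAt_sin _).comp t₀ hv).const_mul b)) hdy
  have hmod := sq_add_sq_eq_of_rotate_eq (p := α / 2 * cos (t₀ / 2)) (q := (1 - α / 2) * sin (t₀ / 2))
    (b := b) (A := α * π / 2 + t₀ * (1 - α / 2)) (B := α * π / 2 - t₀ * (1 + α / 2))
    (r := α / 2 * cos (t₀ / 2)) (w := -((1 + α / 2) * sin (t₀ / 2)))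
    (by linear_combination hex) (by linear_combination hey)
  have hcos : cos t₀ = 1 - 2 * sin (t₀ / 2) ^ 2 := by
    rw [← cos_two_mul_eq_one_sub, mul_div_cancel₀ _ two_ne_zero]
  rw [eq_div_iff (mul_ne_zero two_ne_zero hden), hcos]
  linear_combination 4 * hmod - α ^ 2 * (1 - b ^ 2) * sin_sq_add_cos_sq (t₀ / 2)

/-- Cusp condition for delay `τ = 2`: if both coordinate derivatives of the
boundary curve vanish at `t₀ ∈ (0, 2π)` and `-1 + α + b²(1+α) ≠ 0`, then
`cos t₀ = (-2 + 2α - α² + b²(2 + 2α + α²)) / (2(-1 + α + b²(1+α)))`. -/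
theorem cusp_condition_tau_two (α b : ℝ) (hα : α ∈ Set.Ioo (0 : ℝ) 1)
    (xβ yβ : ℝ → ℝ)
    (hx : ∀ t : ℝ, xβ t = 2 ^ α * (Real.sin (t / 2)) ^ α *
      (Real.cos (α * Real.pi / 2 + t * (1 - α / 2)) -
        b * Real.cos (α * Real.pi / 2 - t * (1 + α / 2))) + 1)
    (hy : ∀ t : ℝ, yβ t = 2 ^ α * (Real.sin (t / 2)) ^ α *
      (Real.sin (α * Real.pi / 2 + t * (1 - α / 2)) -
        b * Real.sin (α * Real.pi / 2 - t * (1 + α / 2))))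
    (t₀ : ℝ) (ht₀ : t₀ ∈ Set.Ioo 0 (2 * Real.pi))
    (hdx : HasDerivAt xβ 0 t₀) (hdy : HasDerivAt yβ 0 t₀)
    (hden : -1 + α + b ^ 2 * (1 + α) ≠ 0) :
    Real.cos t₀ = (-2 + 2 * α - α ^ 2 + b ^ 2 * (2 + 2 * α + α ^ 2)) /
      (2 * (-1 + α + b ^ 2 * (1 + α))) :=
  cusp_condition_tau_two_general α b xβ yβ hx hy t₀ ht₀ hdx hdy hden
end
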